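/- arXiv:1502.04022 — 4 statements merged into one kernel-verified Lean document; each statement's English description precedes it below -/
import Mathlib

section
/- Let G' be a graph with maximum degree at most d/2^{j-1} (for integers d ≥ 1, j ≥ 1), and suppose each vertex independently selects itself with probability p_j = 1/(d/2^{j-1} + 1). For any vertex v with deg(v) ≥ d/2^j, the probability that some neighbor u of v is the unique selected vertex in the closed neighborhood of {u,v} is at least 1/(4e^2). In particular, v becomes inactive (i.e., v or a neighbor of v is added to the independent set) with probability at least 1/(4e^2). -/
/-!
Write `D = d / 2^(j-1)` for the degree bound and `p = 1 / (D + 1)`. For a neighbour `u` of `v`,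
let `E_u` be the event that `u` is the only selected vertex of `N[u] ∪ N[v]`. These events are
pairwise disjoint: on `E_u` the vertex `u` is selected, and `u ∈ N[v] ⊆ N[u'] ∪ N[v]` for every
other neighbour `u'`. The set `N[u] ∪ N[v]` has at most `1 + 2D` elements, so
`P(E_u) ≥ p (1 - p)^(2D) ≥ p / e²`. Summing over the `deg v ≥ D / 2` neighbours gives
`deg(v) p / e² ≥ 1 / (4e²)`, where `deg(v) p ≥ 1/4` because `D ≥ deg v ≥ 1`. On `E_u` the vertex
`u` is selected and has no selected neighbour, which gives the second bound.
-/

open MeasureTheory Finset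
open scoped ENNReal NNReal

set_option linter.deprecated false

lemma PMF.bernoulli_toMeasure_singleton (q : ℝ≥0) (hq : q ≤ 1) (b : Bool) :
    (PMF.bernoulli q hq).toMeasure {b} = ((cond b q (1 - q) : ℝ≥0) : ℝ≥0∞) := by
  rw [PMF.toMeasure_apply_singleton _ _ (measurableSet_singleton _), PMF.bernoulli_apply]

def onlySelectedOn {V : Type*} (S : Finset V) (u : V) : Set (V → Bool) :=
  {ω | ∀ w ∈ S, (ω w = true ↔ w = u)}

lemma measure_pi_bernoulli_onlySelectedOn {V : Type*} [Fintype V] (q : ℝ≥0) (hq : q ≤ 1)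
    {S : Finset V} {u : V} (hu : u ∈ S) :
    Measure.pi (fun _ : V => (PMF.bernoulli q hq).toMeasure) (onlySelectedOn S u)
      = ((q * (1 - q) ^ (#S - 1) : ℝ≥0) : ℝ≥0∞) := by
  classical
  have hset : onlySelectedOn S u = (S : Set V).pi fun w => {decide (w = u)} := by
    ext ω
    simp only [onlySelectedOn, Set.mem_setOf_eq, Set.mem_pi, Finset.mem_coe,
      Set.mem_singleton_iff]
    refine forall₂_congr fun w _ => ?_
    cases ω w <;> simp
  rw [hset, Measure.pi_pi_finset, ← mul_prod_erase _ _ hu, ← card_erase_of_mem hu,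
    ← prod_const]
  simp only [PMF.bernoulli_toMeasure_singleton, decide_true, cond_true]
  push_cast
  congr 1
  refine prod_congr rfl fun w hw => ?_
  simp [ne_of_mem_erase hw]

lemma Real.exp_neg_two_le_one_sub_inv_pow {D : ℝ} (hD : 0 < D) {n : ℕ} (hn : n ≤ 2 * D) :
    exp (-2) ≤ (1 - (D + 1)⁻¹) ^ n := by
  have hbase : exp (-D⁻¹) ≤ 1 - (D + 1)⁻¹ := by
    rw [exp_neg, inv_le_comm₀ (exp_pos _) (by rw [sub_pos, inv_lt_one₀ (by linarith)]; linarith)]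
    calc (1 - (D + 1)⁻¹)⁻¹ = D⁻¹ + 1 := by rw [inv_eq_iff_eq_inv]; field_simp; ring
      _ ≤ exp D⁻¹ := add_one_le_exp _
  calc exp (-2) ≤ exp (-D⁻¹) ^ n := by
        rw [← exp_nat_mul, exp_le_exp, mul_neg, neg_le_neg_iff, ← div_eq_mul_inv, div_le_iff₀ hD]; linarith
    _ ≤ (1 - (D + 1)⁻¹) ^ n := pow_le_pow_left₀ (exp_pos _).le hbase n

lemma one_div_four_le_mul_inv_add_one {k D : ℝ} (hk : 1 ≤ k) (hkD : k ≤ D) (hDk : D / 2 ≤ k) :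
    1 / 4 ≤ k * (D + 1)⁻¹ := by
  rw [← div_eq_mul_inv, le_div_iff₀ (by linarith)]
  linarith

namespace SimpleGraph

variable {V : Type*} [Fintype V] [DecidableEq V] (G : SimpleGraph V) [DecidableRel G.Adj]

def edgeClosedNbhd (u v : V) : Finset V := {w | w = u ∨ w = v ∨ G.Adj u w ∨ G.Adj v w}

variable {G}

lemma mem_edgeClosedNbhd {u v w : V} :
    w ∈ G.edgeClosedNbhd u v ↔ w = u ∨ w = v ∨ G.Adj u w ∨ G.Adj v w := by
  simp [edgeClosedNbhd]

lemma card_edgeClosedNbhd_sub_one_le {u v : V} (huv : G.Adj u v) :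
    #(G.edgeClosedNbhd u v) - 1 ≤ G.degree u + G.degree v := by
  have hsub : (G.edgeClosedNbhd u v).erase u ⊆ G.neighborFinset u ∪ G.neighborFinset v := by
    intro w hw
    obtain ⟨hwu, hw⟩ := mem_erase.1 hw
    simp only [mem_union, mem_neighborFinset]
    rcases mem_edgeClosedNbhd.1 hw with rfl | rfl | h | h
    · exact absurd rfl hwu
    · exact Or.inl huv
    · exact Or.inl h
    · exact Or.inr h
  rw [← card_erase_of_mem (mem_edgeClosedNbhd.2 (Or.inl rfl)), ← card_neighborFinset_eq_degree,
    ← card_neighborFinset_eq_degree]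
  exact (card_le_card hsub).trans (card_union_le _ _)

lemma pairwiseDisjoint_onlySelectedOn_edgeClosedNbhd (v : V) :
    (G.neighborFinset v : Set V).PairwiseDisjoint
      fun u => onlySelectedOn (G.edgeClosedNbhd u v) u := by
  intro u₁ h₁ u₂ _ hne
  refine Set.disjoint_left.2 fun ω hω₁ hω₂ => hne ?_
  have h₁ : G.Adj v u₁ := by simpa using h₁
  exact (hω₂ u₁ (mem_edgeClosedNbhd.2 (.inr (.inr (.inr h₁))))).1
    ((hω₁ u₁ (mem_edgeClosedNbhd.2 (.inl rfl))).2 rfl)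

theorem ofReal_le_measure_exists_adj_onlySelectedOn {D : ℝ} (hD : 0 < D)
    (hdeg : ∀ w, (G.degree w : ℝ) ≤ D) {q : ℝ≥0} (hq1 : q ≤ 1) (hq : (q : ℝ) = (D + 1)⁻¹)
    (v : V) :
    ENNReal.ofReal (G.degree v * q * Real.exp (-2)) ≤
      Measure.pi (fun _ : V => (PMF.bernoulli q hq1).toMeasure)
        {ω | ∃ u, G.Adj v u ∧ ω ∈ onlySelectedOn (G.edgeClosedNbhd u v) u} := by
  set μ := Measure.pi fun _ : V => (PMF.bernoulli q hq1).toMeasure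
  have hE : ∀ u ∈ G.neighborFinset v,
      ENNReal.ofReal (q * Real.exp (-2)) ≤ μ (onlySelectedOn (G.edgeClosedNbhd u v) u) := by
    intro u hu
    have hcard : ((#(G.edgeClosedNbhd u v) - 1 : ℕ) : ℝ) ≤ 2 * D := by
      have hle : ((#(G.edgeClosedNbhd u v) - 1 : ℕ) : ℝ) ≤ G.degree u + G.degree v := by
        exact_mod_cast card_edgeClosedNbhd_sub_one_le ((mem_neighborFinset _ _ _).1 hu).symm
      linarith [hdeg u, hdeg v]
    rw [measure_pi_bernoulli_onlySelectedOn _ _ (mem_edgeClosedNbhd.2 (.inl rfl)),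
      ← ENNReal.ofReal_coe_nnreal]
    refine ENNReal.ofReal_le_ofReal ?_
    push_cast [NNReal.coe_sub hq1]
    rw [hq]
    gcongr
    exact Real.exp_neg_two_le_one_sub_inv_pow hD hcard
  have hunion : {ω | ∃ u, G.Adj v u ∧ ω ∈ onlySelectedOn (G.edgeClosedNbhd u v) u}
      = ⋃ u ∈ G.neighborFinset v, onlySelectedOn (G.edgeClosedNbhd u v) u := by
    ext; simp
  rw [hunion, measure_biUnion_finset (pairwiseDisjoint_onlySelectedOn_edgeClosedNbhd v)
    fun _ _ => (Set.to_countable _).measurableSet]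
  calc ENNReal.ofReal (G.degree v * q * Real.exp (-2))
      = #(G.neighborFinset v) • ENNReal.ofReal (q * Real.exp (-2)) := by
        rw [card_neighborFinset_eq_degree, nsmul_eq_mul, ← ENNReal.ofReal_natCast,
          ← ENNReal.ofReal_mul (by positivity), mul_assoc]
    _ ≤ _ := card_nsmul_le_sum _ _ _ hE

end SimpleGraph

/-- Let `G'` be a graph with maximum degree at most `d/2^{j-1}` (for integers `d ≥ 1`,
`j ≥ 1`), and suppose each vertex independently selects itself with probability
`p_j = 1/(d/2^{j-1} + 1)`. For any vertex `v` with `deg(v) ≥ d/2^j`, the probability that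
some neighbor `u` of `v` is the unique selected vertex in the closed neighborhood of `{u,v}`
is at least `1/(4e²)`. In particular, `v` becomes inactive (some vertex of the closed
neighborhood of `v` is selected with no selected neighbor, hence is added to the independent
set) with probability at least `1/(4e²)`. -/
theorem stmt_0 {V : Type*} [Fintype V] [DecidableEq V]
    (G' : SimpleGraph V) [DecidableRel G'.Adj]
    (d j : ℕ) (hd : 1 ≤ d)
    (hdeg : ∀ w : V, (G'.degree w : ℝ) ≤ (d : ℝ) / 2 ^ (j - 1))
    (pj : ℝ≥0∞) (hpj : pj = 1 / ((d : ℝ≥0∞) / 2 ^ (j - 1) + 1)) (hpj1 : pj ≤ 1)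
    (μ : Measure (V → Bool))
    (hμ : μ = Measure.pi fun _ : V => (PMF.bernoulli pj.toNNReal (by rw [← ENNReal.coe_le_coe, ENNReal.coe_toNNReal (ne_top_of_le_ne_top ENNReal.one_ne_top hpj1)]; simpa using hpj1)).toMeasure)
    (v : V) (hv : (d : ℝ) / 2 ^ j ≤ (G'.degree v : ℝ)) :
    ENNReal.ofReal (1 / (4 * Real.exp 2)) ≤
        μ {ω : V → Bool | ∃ u : V, G'.Adj v u ∧
          ∀ w : V, (w = u ∨ w = v ∨ G'.Adj u w ∨ G'.Adj v w) → (ω w = true ↔ w = u)} ∧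
      ENNReal.ofReal (1 / (4 * Real.exp 2)) ≤
        μ {ω : V → Bool | ∃ u : V, (u = v ∨ G'.Adj v u) ∧ ω u = true ∧
          ∀ w : V, G'.Adj u w → ω w = false} := by
  set D : ℝ := (d : ℝ) / 2 ^ (j - 1)
  have hq : (pj.toNNReal : ℝ) = (D + 1)⁻¹ := by
    rw [ENNReal.coe_toNNReal_eq_toReal, hpj, one_div, ENNReal.toReal_inv,
      ENNReal.toReal_add (ENNReal.div_ne_top (by simp) (by simp)) (by simp), ENNReal.toReal_div]
    simp [D]
  have hdeg_pos : (1 : ℝ) ≤ G'.degree v := by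
    have : (0 : ℝ) < G'.degree v := (by positivity : (0 : ℝ) < d / 2 ^ j).trans_le hv
    exact_mod_cast this
  have hhalf : D / 2 ≤ G'.degree v := by
    refine le_trans ?_ hv
    rw [div_div]
    gcongr
    rw [← pow_succ]
    exact pow_le_pow_right₀ one_le_two (by omega)
  have hunique := G'.ofReal_le_measure_exists_adj_onlySelectedOn (by linarith [hdeg v]) hdeg
    (q := pj.toNNReal) (by simpa using ENNReal.toNNReal_mono ENNReal.one_ne_top hpj1) hq v
  simp only [onlySelectedOn, SimpleGraph.mem_edgeClosedNbhd, ← hμ] at hunique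
  have hconst : 1 / (4 * Real.exp 2) ≤ G'.degree v * pj.toNNReal * Real.exp (-2) := by
    rw [hq, Real.exp_neg]
    calc 1 / (4 * Real.exp 2) = 1 / 4 * (Real.exp 2)⁻¹ := by ring
      _ ≤ _ := by gcongr; exact one_div_four_le_mul_inv_add_one hdeg_pos (hdeg v) hhalf
  have hbound := (ENNReal.ofReal_le_ofReal hconst).trans hunique
  refine ⟨hbound, hbound.trans (measure_mono ?_)⟩
  rintro ω ⟨u, hvu, hω⟩
  refine ⟨u, .inr hvu, (hω u (.inl rfl)).2 rfl, fun w huw => ?_⟩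
  simpa [huw.ne'] using hω w (.inr (.inr (.inl huw)))
end

section
/- Let M and M* be a matching and a maximum matching in a graph G. If every augmenting path with respect to M has length at least 2i-1 (i.e., the shortest augmenting path has length ≥ 2i-1), then |M| ≥ (1 - 1/i)·|M*|. -/
/-!
From a vertex `a` unmatched by `M` but matched by `M'`, follow alternately the `M'`-edge and the
`M`-edge at the current vertex for as long as possible. Because both are matchings, each step can
be retraced, so such a chain never repeats a vertex and two chains from different starts never
share a vertex at positions of equal parity.

A chain that stops after an `M'`-edge is an augmenting path, hence has length at least `2i - 1`,
and its vertices at the `i` even positions `0, 2, …, 2i - 2` are covered by `M'`; this gives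
`i · #(odd chains) ≤ 2|M'|`. A chain that stops after an `M`-edge ends at a vertex covered by `M`
but not by `M'`, and different chains end at different vertices. Since the vertices covered by
`M'` but not by `M` outnumber those covered by `M` but not by `M'` by `2|M'| - 2|M|`, there are
at least `2(|M'| - |M|)` odd chains, so `i|M'| ≤ |M'| + i|M|`.
-/

/-- `M` is a matching of `G`: a set of edges of `G` that are pairwise vertex-disjoint. -/
def IsMatchingSet {V : Type*} (G : SimpleGraph V) (M : Finset (Sym2 V)) : Prop :=
  (∀ e ∈ M, e ∈ G.edgeSet) ∧
    ∀ e ∈ M, ∀ f ∈ M, e ≠ f → ∀ v : V, ¬ (v ∈ e ∧ v ∈ f)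

/-- `p` is an augmenting path with respect to the matching `M`: a path between two distinct
unmatched vertices whose edges alternate between `E \ M` and `M` (the `k`-th edge belongs to
`M` iff `k` is odd). -/
def IsAugmentingPath {V : Type*} (G : SimpleGraph V) (M : Finset (Sym2 V))
    {a b : V} (p : G.Walk a b) : Prop :=
  p.IsPath ∧ a ≠ b ∧ (∀ e ∈ M, a ∉ e) ∧ (∀ e ∈ M, b ∉ e) ∧
    ∀ (k : ℕ) (hk : k < p.edges.length), (p.edges.get ⟨k, hk⟩ ∈ M ↔ k % 2 = 1)

open Finset

namespace SimpleGraph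

variable {V : Type*} (G : SimpleGraph V)

theorem exists_walk_of_forall_adj (f : ℕ → V) {n : ℕ}
    (hadj : ∀ r < n, G.Adj (f r) (f (r + 1))) : ∃ p : G.Walk (f 0) (f n),
      p.support = (List.range (n + 1)).map f ∧
        p.edges = (List.range n).map fun r => s(f r, f (r + 1)) := by
  induction n generalizing f with
  | zero => exact ⟨.nil, by simp, by simp⟩
  | succ n ih =>
    obtain ⟨p, hsupp, hedges⟩ := ih (fun r => f (r + 1)) fun r hr => hadj (r + 1) (by omega)
    refine ⟨.cons (hadj 0 n.succ_pos) p, ?_, ?_⟩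
    · rw [Walk.support_cons, hsupp, List.range_succ_eq_map (n := n + 1), List.map_cons,
        List.map_map]
      rfl
    · rw [Walk.edges_cons, hedges, List.range_succ_eq_map (n := n), List.map_cons, List.map_map]
      rfl

end SimpleGraph

namespace HopcroftKarp

variable {V : Type*} {G : SimpleGraph V} {N : Finset (Sym2 V)} {v w : V}

open Classical in
noncomputable def mate (N : Finset (Sym2 V)) (v : V) : Option V :=
  if h : ∃ w, s(v, w) ∈ N then some h.choose else none

theorem mate_eq_none_iff : mate N v = none ↔ ∀ e ∈ N, v ∉ e := by
  rw [mate]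
  split_ifs with h
  · obtain ⟨w, hw⟩ := h
    simpa using ⟨_, hw, Sym2.mem_mk_left v w⟩
  · push Not at h
    simp only [true_iff]
    rintro e he hve
    obtain ⟨w, rfl⟩ := Sym2.mem_iff_exists.mp hve
    exact h w he

theorem eq_of_mem (hN : IsMatchingSet G N) {w' : V}
    (hw : s(v, w) ∈ N) (hw' : s(v, w') ∈ N) : w = w' := by
  by_contra hne
  exact hN.2 _ hw _ hw' (mt Sym2.congr_right.mp hne) v
    ⟨Sym2.mem_mk_left v w, Sym2.mem_mk_left v w'⟩

theorem mate_eq_some_iff (hN : IsMatchingSet G N) :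
    mate N v = some w ↔ s(v, w) ∈ N := by
  rw [mate]
  split_ifs with h
  · exact ⟨fun hw => Option.some_inj.mp hw ▸ h.choose_spec,
      fun hw => congrArg some (eq_of_mem hN h.choose_spec hw)⟩
  · exact ⟨nofun, fun hw => (h ⟨w, hw⟩).elim⟩

theorem mate_symm (hN : IsMatchingSet G N) (h : mate N v = some w) :
    mate N w = some v := by
  rw [mate_eq_some_iff hN, Sym2.eq_swap, ← mate_eq_some_iff hN]
  exact h

theorem adj_of_mate (hN : IsMatchingSet G N) (h : mate N v = some w) :
    G.Adj v w :=
  hN.1 _ ((mate_eq_some_iff hN).mp h)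

theorem mate_ne_self (hN : IsMatchingSet G N) : mate N v ≠ some v :=
  fun h => (adj_of_mate hN h).ne rfl

noncomputable def altStep (M M' : Finset (Sym2 V)) (n : ℕ) : V → Option V :=
  if n % 2 = 0 then mate M' else mate M

noncomputable def altChain (M M' : Finset (Sym2 V)) (a : V) : ℕ → Option V
  | 0 => some a
  | n + 1 => (altChain M M' a n).bind (altStep M M' n)

variable {M M' : Finset (Sym2 V)} {a : V} {j k n : ℕ}

theorem altStep_of_mod_two_eq_zero (h : n % 2 = 0) : altStep M M' n = mate M' := if_pos h

theorem altStep_of_mod_two_eq_one (h : n % 2 = 1) : altStep M M' n = mate M := if_neg (by omega)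

theorem altStep_congr (h : j % 2 = k % 2) : altStep M M' j = altStep M M' k := by
  simp only [altStep, h]

theorem altStep_symm (hM : IsMatchingSet G M) (hM' : IsMatchingSet G M')
    (h : altStep M M' n v = some w) : altStep M M' n w = some v := by
  unfold altStep at h ⊢
  split_ifs at h ⊢
  exacts [mate_symm hM' h, mate_symm hM h]

theorem altStep_ne_self (hM : IsMatchingSet G M) (hM' : IsMatchingSet G M') :
    altStep M M' n v ≠ some v := by
  unfold altStep
  split_ifs
  exacts [mate_ne_self hM', mate_ne_self hM]

theorem adj_of_altStep (hM : IsMatchingSet G M) (hM' : IsMatchingSet G M')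
    (h : altStep M M' n v = some w) : G.Adj v w := by
  unfold altStep at h
  split_ifs at h
  exacts [adj_of_mate hM' h, adj_of_mate hM h]

theorem altChain_succ_of_eq_some (h : altChain M M' a n = some v) :
    altChain M M' a (n + 1) = altStep M M' n v := by
  rw [altChain, h, Option.bind_some]

theorem exists_altChain_of_succ (hM : IsMatchingSet G M) (hM' : IsMatchingSet G M')
    (h : altChain M M' a (n + 1) = some w) :
    ∃ v, altChain M M' a n = some v ∧ altStep M M' n w = some v := by
  obtain ⟨v, hv, hvw⟩ := Option.bind_eq_some_iff.mp h
  exact ⟨v, hv, altStep_symm hM hM' hvw⟩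

theorem altChain_ne_none_of_le (h : altChain M M' a n ≠ none) (hjn : j ≤ n) :
    altChain M M' a j ≠ none := by
  induction n with
  | zero => rwa [Nat.le_zero.mp hjn]
  | succ n ih =>
    rcases hjn.eq_or_lt with rfl | hlt
    · exact h
    · exact ih (fun hn => h (by rw [altChain, hn, Option.bind_none])) (by omega)

/-- An `M`-unmatched vertex can only be entered along an `M'`-edge. -/
theorem mod_two_eq_zero_of_altChain_succ (hM : IsMatchingSet G M) (hM' : IsMatchingSet G M')
    (hv : mate M v = none) (h : altChain M M' a (k + 1) = some v) : k % 2 = 0 := by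
  obtain ⟨u, -, hvu⟩ := exists_altChain_of_succ hM hM' h
  by_contra hk
  rw [altStep_of_mod_two_eq_one (by omega), hv] at hvu
  exact Option.some_ne_none u hvu.symm

/-- If `v` sat at positions `j < k` of opposite parity, the steps out of `j` and into `k` would
use the same matching, putting `v`'s partner at positions `j + 1` and `k - 1`. -/
theorem altChain_mod_two_eq_of_add (hM : IsMatchingSet G M) (hM' : IsMatchingSet G M')
    (d : ℕ) : ∀ {j k : ℕ} {v : V}, j + d = k → altChain M M' a j = some v →
      altChain M M' a k = some v → j % 2 = k % 2 := by
  induction d using Nat.strong_induction_on with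
  | _ d ih =>
    intro j k v hjk hj hk
    by_contra hpar
    obtain ⟨k, rfl⟩ : ∃ k', k = k' + 1 := ⟨k - 1, by omega⟩
    obtain ⟨u, hu, hvu⟩ := exists_altChain_of_succ hM hM' hk
    have hju : altChain M M' a (j + 1) = some u := by
      rw [altChain_succ_of_eq_some hj, altStep_congr (show j % 2 = k % 2 by omega), hvu]
    rcases Nat.lt_or_ge d 2 with hd | hd
    · obtain rfl : j = k := by omega
      exact altStep_ne_self hM hM' (Option.some_inj.mp (hju.symm.trans hk) ▸ hvu)
    · have := ih (d - 2) (by omega) (by omega) hju hu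
      omega

theorem altChain_mod_two_eq (hM : IsMatchingSet G M) (hM' : IsMatchingSet G M')
    (hj : altChain M M' a j = some v) (hk : altChain M M' a k = some v) : j % 2 = k % 2 := by
  rcases le_total j k with hjk | hkj
  · exact altChain_mod_two_eq_of_add hM hM' (k - j) (by omega) hj hk
  · exact (altChain_mod_two_eq_of_add hM hM' (j - k) (by omega) hk hj).symm

theorem eq_and_eq_of_altChain_eq (hM : IsMatchingSet G M) (hM' : IsMatchingSet G M') {a' : V}
    (ha : mate M a = none) (ha' : mate M a' = none) :
    ∀ {j k : ℕ} {v : V}, altChain M M' a j = some v → altChain M M' a' k = some v →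
      j % 2 = k % 2 → a = a' ∧ j = k := by
  intro j
  induction j with
  | zero =>
    intro k v hj hk hpar
    obtain rfl : a = v := Option.some_inj.mp hj
    cases k with
    | zero => exact ⟨(Option.some_inj.mp hk).symm, rfl⟩
    | succ k => have := mod_two_eq_zero_of_altChain_succ hM hM' ha hk; omega
  | succ j ih =>
    intro k v hj hk hpar
    cases k with
    | zero =>
      obtain rfl : a' = v := Option.some_inj.mp hk
      have := mod_two_eq_zero_of_altChain_succ hM hM' ha' hj; omega
    | succ k =>
      obtain ⟨u, hu, hvu⟩ := exists_altChain_of_succ hM hM' hj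
      obtain ⟨u', hu', hvu'⟩ := exists_altChain_of_succ hM hM' hk
      rw [altStep_congr (show j % 2 = k % 2 by omega), hvu'] at hvu
      obtain rfl := Option.some_inj.mp hvu
      exact (ih hu hu' (by omega)).imp_right (congrArg (· + 1))

theorem altChain_inj (hM : IsMatchingSet G M) (hM' : IsMatchingSet G M')
    (ha : mate M a = none) (hj : altChain M M' a j = some v)
    (hk : altChain M M' a k = some v) : j = k :=
  (eq_and_eq_of_altChain_eq hM hM' ha ha hj hk (altChain_mod_two_eq hM hM' hj hk)).2

theorem exists_altChain_end [Finite V] (hM : IsMatchingSet G M) (hM' : IsMatchingSet G M')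
    (ha : mate M a = none) :
    ∃ n b, altChain M M' a n = some b ∧ altChain M M' a (n + 1) = none := by
  have hnone : ∃ n, altChain M M' a n = none := by
    by_contra! hsome
    refine not_injective_infinite_finite (fun n => (altChain M M' a n).getD a) fun j k hjk => ?_
    obtain ⟨v, hv⟩ := Option.ne_none_iff_exists'.mp (hsome j)
    obtain ⟨w, hw⟩ := Option.ne_none_iff_exists'.mp (hsome k)
    simp only [hv, hw, Option.getD_some] at hjk
    exact altChain_inj hM hM' ha hv (hjk ▸ hw)
  classical
  obtain ⟨n, hn⟩ : ∃ n, Nat.find hnone = n + 1 :=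
    Nat.exists_eq_succ_of_ne_zero fun h0 => by simpa [h0, altChain] using Nat.find_spec hnone
  obtain ⟨b, hb⟩ := Option.ne_none_iff_exists'.mp (Nat.find_min hnone (by omega : n < _))
  exact ⟨n, b, hb, hn ▸ Nat.find_spec hnone⟩

theorem exists_isAugmentingPath_of_altChain (hM : IsMatchingSet G M)
    (hM' : IsMatchingSet G M') {b : V} (ha : mate M a = none) (hb : altChain M M' a n = some b)
    (hend : altChain M M' a (n + 1) = none) (hn : n % 2 = 1) :
    ∃ p : G.Walk a b, IsAugmentingPath G M p ∧ p.length = n := by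
  set f : ℕ → V := fun r => (altChain M M' a r).getD a
  have hf : ∀ r ≤ n, altChain M M' a r = some (f r) := fun r hr => by
    have hr : altChain M M' a r ≠ none := altChain_ne_none_of_le (by simp [hb]) hr
    obtain ⟨v, hv⟩ := Option.ne_none_iff_exists'.mp hr
    simp [f, hv]
  have hstep : ∀ r < n, altStep M M' r (f r) = some (f (r + 1)) := fun r hr => by
    rw [← altChain_succ_of_eq_some (hf r hr.le), hf (r + 1) hr]
  have hinj : ∀ j ≤ n, ∀ k ≤ n, f j = f k → j = k := fun j hj k hk h =>
    altChain_inj hM hM' ha (hf j hj) (h ▸ hf k hk)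
  have hf0 : f 0 = a := rfl
  have hfn : f n = b := Option.some_inj.mp ((hf n le_rfl).symm.trans hb)
  obtain ⟨p, hsupp, hedges⟩ :=
    G.exists_walk_of_forall_adj f fun r hr => adj_of_altStep hM hM' (hstep r hr)
  have hlen : p.length = n := by simpa [hedges] using p.length_edges.symm
  refine ⟨p.copy hf0 hfn, ⟨?_, ?_, mate_eq_none_iff.mp ha, ?_, ?_⟩, by simp [hlen]⟩
  · rw [SimpleGraph.Walk.isPath_copy, SimpleGraph.Walk.isPath_def, hsupp]
    refine List.Nodup.map_on (fun j hj k hk => ?_) List.nodup_range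
    exact hinj j (Nat.lt_succ_iff.mp (List.mem_range.mp hj))
      k (Nat.lt_succ_iff.mp (List.mem_range.mp hk))
  · intro h
    have := hinj 0 n.zero_le n le_rfl (hf0 ▸ hfn ▸ h)
    omega
  · rw [altChain_succ_of_eq_some hb, altStep_of_mod_two_eq_one hn] at hend
    exact mate_eq_none_iff.mp hend
  · intro k hk
    simp only [SimpleGraph.Walk.edges_copy, hedges, List.get_eq_getElem, List.getElem_map,
      List.getElem_range, ← mate_eq_some_iff hM]
    simp only [SimpleGraph.Walk.edges_copy, hedges, List.length_map, List.length_range] at hk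
    refine ⟨fun hmate => ?_, fun hodd => altStep_of_mod_two_eq_one hodd ▸ hstep k hk⟩
    by_contra heven
    cases k with
    | zero => exact Option.some_ne_none _ (hmate.symm.trans ha)
    | succ k =>
      have hprev :=
        mate_symm hM (altStep_of_mod_two_eq_one (n := k) (by omega) ▸ hstep k (by omega))
      have := hinj k (by omega) (k + 2) (by omega) (Option.some_inj.mp (hprev.symm.trans hmate))
      omega

variable [DecidableEq V]

def cover (N : Finset (Sym2 V)) : Finset V :=
  N.biUnion Sym2.toFinset

theorem mem_cover_iff_mate_ne_none : v ∈ cover N ↔ mate N v ≠ none := by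
  simp [cover, mate_eq_none_iff, Sym2.mem_toFinset]

theorem card_cover (hN : IsMatchingSet G N) : #(cover N) = 2 * #N := by
  rw [cover, card_biUnion, sum_congr rfl fun e he =>
    Sym2.card_toFinset_of_not_isDiag e (G.not_isDiag_of_mem_edgeSet (hN.1 e he)), sum_const,
    smul_eq_mul, mul_comm]
  intro e he f hf hef
  rw [Function.onFun, disjoint_left]
  intro v hve hvf
  exact hN.2 e he f hf hef v ⟨Sym2.mem_toFinset.mp hve, Sym2.mem_toFinset.mp hvf⟩

theorem mul_card_le_card_cover (hM : IsMatchingSet G M) (hM' : IsMatchingSet G M')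
    {S : Finset V} {i : ℕ}
    (hS : ∀ a ∈ S, mate M a = none ∧ altChain M M' a (2 * i - 1) ≠ none) :
    i * #S ≤ #(cover M') := by
  rw [mul_comm, ← card_range i, ← card_product]
  refine card_le_card_of_forall_subsingleton (fun q v => altChain M M' q.1 (2 * q.2) = some v)
    (fun ⟨a, r⟩ hq => ?_) fun v _ ⟨a, r⟩ ha ⟨a', r'⟩ ha' => ?_
  · obtain ⟨haS, hr⟩ := mem_product.mp hq
    have hr : 2 * r + 1 ≤ 2 * i - 1 := by simp only [mem_range] at hr; omega
    obtain ⟨w, hw⟩ := Option.ne_none_iff_exists'.mp (altChain_ne_none_of_le (hS a haS).2 hr)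
    obtain ⟨v, hv, hvw⟩ := Option.bind_eq_some_iff.mp hw
    rw [altStep_of_mod_two_eq_zero (by omega)] at hvw
    exact ⟨v, mem_cover_iff_mate_ne_none.mpr (by simp [hvw]), hv⟩
  · simp only [Set.mem_ofPred_eq, mem_product] at ha ha'
    obtain ⟨rfl, h⟩ :=
      eq_and_eq_of_altChain_eq hM hM' (hS a ha.1.1).1 (hS a' ha'.1.1).1 ha.2 ha'.2 (by omega)
    exact Prod.ext rfl (by omega)

theorem card_le_card_cover_sdiff (hM : IsMatchingSet G M) (hM' : IsMatchingSet G M')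
    {S : Finset V} (hS : ∀ a ∈ S, mate M a = none ∧ mate M' a ≠ none ∧ ∃ n b, n % 2 = 0 ∧
      altChain M M' a n = some b ∧ altChain M M' a (n + 1) = none) :
    #S ≤ #(cover M \ cover M') := by
  refine card_le_card_of_forall_subsingleton (fun a b => ∃ n, n % 2 = 0 ∧
    altChain M M' a n = some b ∧ altChain M M' a (n + 1) = none) (fun a ha => ?_)
    fun b _ a ⟨ha, n, hn, hb, _⟩ a' ⟨ha', n', hn', hb', _⟩ =>
      (eq_and_eq_of_altChain_eq hM hM' (hS a ha).1 (hS a' ha').1 hb hb' (by omega)).1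
  obtain ⟨haM, haM', n, b, hn, hb, hend⟩ := hS a ha
  refine ⟨b, ?_, n, hn, hb, hend⟩
  rw [altChain_succ_of_eq_some hb, altStep_of_mod_two_eq_zero hn] at hend
  obtain ⟨n, rfl⟩ : ∃ m, n = m + 1 := Nat.exists_eq_succ_of_ne_zero fun h0 => by
    subst h0
    obtain rfl : a = b := Option.some_inj.mp hb
    exact haM' hend
  obtain ⟨u, -, hbu⟩ := exists_altChain_of_succ hM hM' hb
  rw [altStep_of_mod_two_eq_one (by omega)] at hbu
  simp [mem_sdiff, mem_cover_iff_mate_ne_none, hbu, hend]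

theorem mul_card_le_card_add_mul_card [Finite V] (hM : IsMatchingSet G M)
    (hM' : IsMatchingSet G M') {i : ℕ}
    (hpath : ∀ (a b : V) (p : G.Walk a b), IsAugmentingPath G M p → 2 * i - 1 ≤ p.length) :
    i * #M' ≤ #M' + i * #M := by
  classical
  set A := cover M' \ cover M
  set EndsOdd : V → Prop := fun a =>
    ∃ n b, n % 2 = 1 ∧ altChain M M' a n = some b ∧ altChain M M' a (n + 1) = none
  have hA : ∀ a ∈ A, mate M a = none ∧ mate M' a ≠ none := fun a ha => by
    simpa [A, mem_sdiff, mem_cover_iff_mate_ne_none, and_comm] using ha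
  have hodd : i * #(A.filter EndsOdd) ≤ 2 * #M' := by
    rw [← card_cover hM']
    refine mul_card_le_card_cover hM hM' fun a ha => ?_
    obtain ⟨haA, n, b, hn, hb, hend⟩ := mem_filter.mp ha
    obtain ⟨p, hp, rfl⟩ := exists_isAugmentingPath_of_altChain hM hM' (hA a haA).1 hb hend hn
    exact ⟨(hA a haA).1, altChain_ne_none_of_le (by simp [hb]) (hpath a b p hp)⟩
  have heven : #(A.filter (¬ EndsOdd ·)) ≤ #(cover M \ cover M') := by
    refine card_le_card_cover_sdiff hM hM' fun a ha => ?_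
    obtain ⟨haA, hodd⟩ := mem_filter.mp ha
    obtain ⟨n, b, hb, hend⟩ := exists_altChain_end hM hM' (hA a haA).1
    have hn : n % 2 = 0 := by
      by_contra h
      exact hodd ⟨n, b, by omega, hb, hend⟩
    exact ⟨(hA a haA).1, (hA a haA).2, n, b, hn, hb, hend⟩
  have hcover : #A + #(cover M) = #(cover M \ cover M') + #(cover M') := by
    rw [card_sdiff_add_card, card_sdiff_add_card, union_comm]
  have hsplit := card_filter_add_card_filter_not (s := A) EndsOdd
  rw [card_cover hM, card_cover hM'] at hcover
  have hdeficit : 2 * #M' ≤ #(A.filter EndsOdd) + 2 * #M := by omega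
  nlinarith [Nat.mul_le_mul_left i hdeficit]

end HopcroftKarp

theorem stmt_2_general {V : Type*} [Fintype V] [DecidableEq V]
    (G : SimpleGraph V)
    (M Mstar : Finset (Sym2 V))
    (hM : IsMatchingSet G M) (hMstar : IsMatchingSet G Mstar)
    (i : ℕ) (hi : 1 ≤ i)
    (hpath : ∀ (a b : V) (p : G.Walk a b), IsAugmentingPath G M p → 2 * i - 1 ≤ p.length) :
    (1 - 1 / (i : ℝ)) * Mstar.card ≤ (M.card : ℝ) := by
  have hcount : (i : ℝ) * Mstar.card ≤ Mstar.card + i * M.card := by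
    exact_mod_cast HopcroftKarp.mul_card_le_card_add_mul_card hM hMstar hpath
  have hi₀ : (0 : ℝ) < i := by exact_mod_cast hi
  rw [sub_mul, one_mul, one_div, inv_mul_eq_div, sub_le_iff_le_add, add_div' _ _ _ hi₀.ne',
    le_div_iff₀ hi₀]
  linarith

/-- Hopcroft–Karp: let `M` and `M*` be a matching and a maximum matching in `G`. If every
augmenting path with respect to `M` has length at least `2i - 1`, then
`|M| ≥ (1 - 1/i)·|M*|`. -/
theorem stmt_2 {V : Type*} [Fintype V] [DecidableEq V]
    (G : SimpleGraph V)
    (M Mstar : Finset (Sym2 V))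
    (hM : IsMatchingSet G M) (hMstar : IsMatchingSet G Mstar)
    (hMstarMax : ∀ N : Finset (Sym2 V), IsMatchingSet G N → N.card ≤ Mstar.card)
    (i : ℕ) (hi : 1 ≤ i)
    (hpath : ∀ (a b : V) (p : G.Walk a b), IsAugmentingPath G M p → 2 * i - 1 ≤ p.length) :
    (1 - 1 / (i : ℝ)) * Mstar.card ≤ (M.card : ℝ) :=
  stmt_2_general G M Mstar hM hMstar i hi hpath
end

section
/- Let G be a graph and π, π' two linear orders on V that agree on a downward-closed set: suppose S ⊆ V is such that for all u ∈ S and w ∈ V, w <_π u iff w <_π' u, and S is closed under taking π-predecessors that are neighbors of elements reached by the greedy recursion. Then for every v ∈ S, v ∈ I_π if and only if v ∈ I_{π'}, where I_π denotes the lexicographically first MIS with respect to π. -/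
/-- Let `G` be a graph and let `r, r'` (injective rank functions into `ℕ`) be two linear
orders on `V`. Let `I_r` and `I_{r'}` be the lexicographically first maximal independent sets
with respect to these orders, characterized recursively. Suppose `S ⊆ V` is such that the two
orders agree on `S` (for all `u ∈ S` and `w ∈ V`, `w <_r u ↔ w <_{r'} u`) and `S` is closed
under taking `r`-preceding neighbors. Then for every `v ∈ S`, `v ∈ I_r ↔ v ∈ I_{r'}`. -/
theorem stmt_8 {V : Type*} (G : SimpleGraph V)
    (r r' : V → ℕ) (hr : Function.Injective r) (hr' : Function.Injective r')
    (I I' : Set V)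
    (hI : ∀ v : V, v ∈ I ↔ ∀ u : V, G.Adj v u → r u < r v → u ∉ I)
    (hI' : ∀ v : V, v ∈ I' ↔ ∀ u : V, G.Adj v u → r' u < r' v → u ∉ I')
    (S : Set V)
    (hagree : ∀ u ∈ S, ∀ w : V, r w < r u ↔ r' w < r' u)
    (hclosed : ∀ v ∈ S, ∀ u : V, G.Adj v u → r u < r v → u ∈ S) :
    ∀ v ∈ S, (v ∈ I ↔ v ∈ I') := by
  have key : ∀ n : ℕ, ∀ v ∈ S, r v = n → (v ∈ I ↔ v ∈ I') := by
    intro n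
    induction n using Nat.strong_induction_on with
    | _ n ih =>
      intro v hv hn
      rw [hI, hI']
      constructor
      · intro h u hadj hlt'
        have hlt : r u < r v := (hagree v hv u).mpr hlt'
        have hu : u ∈ S := hclosed v hv u hadj hlt
        rw [← ih (r u) (hn ▸ hlt) u hu rfl]
        exact h u hadj hlt
      · intro h u hadj hlt
        have hlt' : r' u < r' v := (hagree v hv u).mp hlt
        have hu : u ∈ S := hclosed v hv u hadj hlt
        rw [ih (r u) (hn ▸ hlt) u hu rfl]
        exact h u hadj hlt'
  exact fun v hv => key (r v) v hv rfl
end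

section
/- Let S ⊆ V with pairwise G-distance at least 5, and suppose in each of r independent rounds, each vertex v ∈ S still 'active' at the start of the round remains active after the round with probability at most p < 1, where survival of v depends only on fresh random labels of vertices within distance 2 of v. Then the probability that all vertices of S remain active after all r rounds is at most p^{r·|S|}. -/
open MeasureTheory
open scoped ENNReal

universe u v

private lemma aux_cyl {ι : Type*} : ∀ (n : ℕ) {δ : Type u} [Fintype δ] {F : δ → Type v}
    [∀ w, MeasurableSpace (F w)]
    (ν : ∀ w, Measure (F w)) [∀ w, IsProbabilityMeasure (ν w)]
    (T : Finset ι), T.card ≤ n → ∀ (t : ι → Set δ) (A : ι → Set (∀ w, F w)),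
    (∀ u ∈ T, ∀ v ∈ T, u ≠ v → Disjoint (t u) (t v)) →
    (∀ v ∈ T, ∃ B : Set (∀ w : t v, F w.1), A v = {ω | (fun w : t v => ω w.1) ∈ B}) →
    Measure.pi ν (⋂ v ∈ T, A v) ≤ ∏ v ∈ T, Measure.pi ν (A v) := by
  intro n
  induction n with
  | zero =>
    intro δ _ F _ ν _ T hT t A hdisj hcyl
    rw [Nat.le_zero, Finset.card_eq_zero] at hT; subst hT; simp
  | succ n ih =>
    intro δ _ F _ ν _ T hT t A hdisj hcyl
    classical
    rcases T.eq_empty_or_nonempty with rfl | ⟨a, ha⟩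
    · simp
    have hF : ∀ w, Nonempty (F w) := by
      intro w
      by_contra h
      rw [not_nonempty_iff] at h
      have h1 := measure_univ (μ := ν w)
      rw [Set.univ_eq_empty_iff.mpr h, measure_empty] at h1
      simp at h1
    -- split off the coordinates in `t a`
    set e := MeasurableEquiv.piEquivPiSubtypeProd F (· ∈ t a) with he
    have hmp := measurePreserving_piEquivPiSubtypeProd ν (· ∈ t a)
    set μ₁ := Measure.pi fun w : Subtype (· ∈ t a) => ν w.1 with hμ₁
    set μ₂ := Measure.pi fun w : {w // ¬ w ∈ t a} => ν w.1 with hμ₂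
    have hmap : ∀ s : Set ((∀ w : Subtype (· ∈ t a), F w.1) × ∀ w : {w // ¬ w ∈ t a}, F w.1),
        Measure.pi ν (e ⁻¹' s) = (μ₁.prod μ₂) s := by
      intro s
      rw [← hmp.map_eq, MeasurableEquiv.map_apply]
    obtain ⟨Ba, hAa⟩ := hcyl a ha
    let ξ₀ : ∀ w : Subtype (· ∈ t a), F w.1 := fun w => Classical.arbitrary _
    set A' : ι → Set (∀ w : {w // ¬ w ∈ t a}, F w.1) :=
      (fun v => (fun η => e.symm (ξ₀, η)) ⁻¹' A v) with hA'
    have hn : ∀ v ∈ T.erase a, ∀ w ∈ t v, w ∉ t a := by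
      intro v hv w hw
      exact fun hwa => Set.disjoint_left.mp
        (hdisj v (Finset.mem_of_mem_erase hv) a ha (Finset.ne_of_mem_erase hv)) hw hwa
    -- computing e.symm on coordinates of t v
    have hsym : ∀ (v : ι) (hv : ∀ w ∈ t v, w ∉ t a) (η : ∀ w : {w // ¬ w ∈ t a}, F w.1),
        (fun w : t v => (e.symm (ξ₀, η)) w.1) = (fun w : t v => η ⟨w.1, hv w.1 w.2⟩) := by
      intro v hv η
      funext w
      show (Equiv.piEquivPiSubtypeProd (· ∈ t a) F).symm (ξ₀, η) w.1 = _
      rw [Equiv.piEquivPiSubtypeProd_symm_apply, dif_neg (hv w.1 w.2)]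
    -- membership characterizations
    have hmem_a : ∀ ω, ω ∈ A a ↔ (e ω).1 ∈ Ba := by
      intro ω; rw [hAa]; exact Iff.rfl
    have hmem_v : ∀ v ∈ T.erase a, ∀ ω, (ω ∈ A v ↔ (e ω).2 ∈ A' v) := by
      intro v hv ω
      obtain ⟨Bv, hBv⟩ := hcyl v (Finset.mem_of_mem_erase hv)
      have h2 : (e.symm (ξ₀, (e ω).2) ∈ A v) ↔ ω ∈ A v := by
        rw [hBv]
        show ((fun w : t v => (e.symm (ξ₀, (e ω).2)) w.1) ∈ Bv) ↔ _
        rw [hsym v (hn v hv) ((e ω).2)]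
        exact Iff.rfl
      exact h2.symm
    -- the intersection as a rectangle
    have key : ⋂ v ∈ T, A v = e ⁻¹' (Ba ×ˢ ⋂ v ∈ T.erase a, A' v) := by
      ext ω
      simp only [Set.mem_iInter, Set.mem_preimage, Set.mem_prod, Set.mem_iInter]
      constructor
      · intro h
        refine ⟨(hmem_a ω).mp (h a ha), fun v hv => (hmem_v v hv ω).mp
          (h v (Finset.mem_of_mem_erase hv))⟩
      · rintro ⟨h1, h2⟩ v hv
        rcases eq_or_ne v a with rfl | hne
        · exact (hmem_a ω).mpr h1
        · exact (hmem_v v (Finset.mem_erase.mpr ⟨hne, hv⟩) ω).mpr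
            (h2 v (Finset.mem_erase.mpr ⟨hne, hv⟩))
    have hmeasa : Measure.pi ν (A a) = μ₁ Ba := by
      have : A a = e ⁻¹' (Ba ×ˢ (Set.univ : Set (∀ w : {w // ¬ w ∈ t a}, F w.1))) := by
        ext ω
        simp only [Set.mem_preimage, Set.mem_prod, Set.mem_univ, and_true]
        exact hmem_a ω
      rw [this, hmap, Measure.prod_prod, measure_univ, mul_one]
    have hmeasv : ∀ v ∈ T.erase a, Measure.pi ν (A v) = μ₂ (A' v) := by
      intro v hv
      have : A v = e ⁻¹' ((Set.univ : Set (∀ w : Subtype (· ∈ t a), F w.1)) ×ˢ A' v) := by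
        ext ω
        simp only [Set.mem_preimage, Set.mem_prod, Set.mem_univ, true_and]
        exact hmem_v v hv ω
      rw [this, hmap, Measure.prod_prod, measure_univ, one_mul]
    -- apply the induction hypothesis on the complement coordinates
    have hIH : μ₂ (⋂ v ∈ T.erase a, A' v) ≤ ∏ v ∈ T.erase a, μ₂ (A' v) := by
      refine ih _ (T.erase a) ?_ (fun v => {w : {w // ¬ w ∈ t a} | w.1 ∈ t v}) A' ?_ ?_
      · have := Finset.card_erase_of_mem ha
        omega
      · intro u hu v hv huv
        rw [Set.disjoint_left]
        rintro w hwu hwv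
        exact Set.disjoint_left.mp
          (hdisj u (Finset.mem_of_mem_erase hu) v (Finset.mem_of_mem_erase hv) huv) hwu hwv
      · intro v hv
        obtain ⟨Bv, hBv⟩ := hcyl v (Finset.mem_of_mem_erase hv)
        refine ⟨(fun (ξ : ∀ u : {u : {w // w ∉ t a} // u.1 ∈ t v}, F u.1.1) =>
          (fun w : t v => ξ ⟨⟨w.1, hn v hv w.1 w.2⟩, w.2⟩)) ⁻¹' Bv, ?_⟩
        ext η
        show e.symm (ξ₀, η) ∈ A v ↔ _
        rw [hBv]
        show ((fun w : t v => (e.symm (ξ₀, η)) w.1) ∈ Bv) ↔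
          ((fun w : t v => η ⟨w.1, hn v hv w.1 w.2⟩) ∈ Bv)
        rw [hsym v (hn v hv) η]
    calc Measure.pi ν (⋂ v ∈ T, A v)
        = μ₁ Ba * μ₂ (⋂ v ∈ T.erase a, A' v) := by rw [key, hmap, Measure.prod_prod]
      _ ≤ μ₁ Ba * ∏ v ∈ T.erase a, μ₂ (A' v) := mul_le_mul_right hIH _
      _ = Measure.pi ν (A a) * ∏ v ∈ T.erase a, Measure.pi ν (A v) := by
          rw [hmeasa, Finset.prod_congr rfl fun v hv => (hmeasv v hv).symm]
      _ = ∏ v ∈ T, Measure.pi ν (A v) := Finset.mul_prod_erase T (fun v => Measure.pi ν (A v)) ha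

/-- Let `S ⊆ V` have pairwise `G`-distance at least `5`, and suppose in each of `r` independent
rounds each vertex `v ∈ S` that is still active survives the round with probability at most
`p < 1`, where survival of `v` in round `i` depends only on the fresh random labels (of round
`i`) of vertices within distance `2` of `v`. Then the probability that all of `S` remains
active after all `r` rounds is at most `p^{r·|S|}`. -/
theorem stmt_16 {V : Type*} [Fintype V] [DecidableEq V]
    (G : SimpleGraph V) [DecidableRel G.Adj] (d : ℕ) (hdeg : ∀ v : V, G.degree v ≤ d)
    (S : Finset V)
    (hS : ∀ u ∈ S, ∀ v ∈ S, u ≠ v → ∀ p : G.Walk u v, 5 ≤ p.length)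
    (r : ℕ) (E : Fin r → V → Type*) [∀ i w, MeasurableSpace (E i w)]
    (μi : ∀ i : Fin r, ∀ w : V, Measure (E i w)) [∀ i w, IsProbabilityMeasure (μi i w)]
    (p : ℝ≥0∞) (hp : p < 1)
    (sur : ∀ i : Fin r, V → Set (∀ w, E i w))
    (hloc : ∀ (i : Fin r) (v : V),
      ∃ B : Set ((w : {w : V // ∃ q : G.Walk w v, q.length ≤ 2}) → E i w.1),
        MeasurableSet B ∧
          sur i v = {ω | (fun w : {w : V // ∃ q : G.Walk w v, q.length ≤ 2} => ω w.1) ∈ B})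
    (hprob : ∀ (i : Fin r), ∀ v ∈ S, (Measure.pi (μi i)) (sur i v) ≤ p)
    (AllActive : Set (∀ i : Fin r, ∀ w, E i w))
    (hsub : AllActive ⊆ {ω | ∀ i : Fin r, ∀ v ∈ S, ω i ∈ sur i v}) :
    (Measure.pi fun i => Measure.pi (μi i)) AllActive ≤ p ^ (r * S.card) := by
  classical
  -- distance-2 balls
  set t : V → Set V := fun v => {w : V | ∃ q : G.Walk w v, q.length ≤ 2} with ht
  have hdisj : ∀ u ∈ S, ∀ v ∈ S, u ≠ v → Disjoint (t u) (t v) := by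
    intro u hu v hv huv
    rw [Set.disjoint_left]
    rintro w ⟨qu, hqu⟩ ⟨qv, hqv⟩
    have h5 := hS u hu v hv huv (qu.reverse.append qv)
    rw [SimpleGraph.Walk.length_append, SimpleGraph.Walk.length_reverse] at h5
    omega
  -- per-round bound
  have hround : ∀ i : Fin r, Measure.pi (μi i) (⋂ v ∈ S, sur i v) ≤ p ^ S.card := by
    intro i
    have h1 : Measure.pi (μi i) (⋂ v ∈ S, sur i v) ≤ ∏ v ∈ S, Measure.pi (μi i) (sur i v) := by
      refine aux_cyl S.card (μi i) S le_rfl t (sur i) hdisj ?_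
      intro v hv
      obtain ⟨B, _, hB⟩ := hloc i v
      exact ⟨B, hB⟩
    refine h1.trans ?_
    rw [← Finset.prod_const]
    exact Finset.prod_le_prod' fun v hv => hprob i v hv
  -- combine rounds
  have h2 : AllActive ⊆ Set.pi Set.univ (fun i => ⋂ v ∈ S, sur i v) := by
    intro ω hω
    rw [Set.mem_univ_pi]
    intro i
    rw [Set.mem_iInter₂]
    exact fun v hv => hsub hω i v hv
  calc (Measure.pi fun i => Measure.pi (μi i)) AllActive
      ≤ (Measure.pi fun i => Measure.pi (μi i))
          (Set.pi Set.univ (fun i => ⋂ v ∈ S, sur i v)) := measure_mono h2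
    _ = ∏ i : Fin r, Measure.pi (μi i) (⋂ v ∈ S, sur i v) := Measure.pi_pi _ _
    _ ≤ ∏ _i : Fin r, p ^ S.card := Finset.prod_le_prod' fun i _ => hround i
    _ = p ^ (r * S.card) := by
        rw [Finset.prod_const, ← pow_mul, Finset.card_univ, Fintype.card_fin, Nat.mul_comm]
end
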